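/- arXiv:1208.1412 — 2 statements merged into one kernel-verified Lean document; each statement's English description precedes it below -/
import Mathlib

section
/- Let p be a prime with p ≡ 1 (mod 8). Then 2 is a fourth power modulo p (i.e., there exists an integer z with z⁴ ≡ 2 (mod p)) if and only if there exist integers x and y with p = x² + 64y². -/
/-!
Write `p = a² + 16c²`: of the two squares in `p = a² + b²` one is odd, and `p ≡ 1 (mod 8)` forces
`4 ∣ b`. In `ZMod p` we have `a² = -b²`, hence `(a + b)² = 2ab` and
`(a + b)^((p-1)/2) = 2^((p-1)/4) · (-1)^((p-1)/8) · a^((p-1)/2)`. Quadratic reciprocity gives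
`(a | p) = (p | a) = (b² | a) = 1` and `(a + b | p) = (p | a + b) = (2a² | a + b) = χ₈(a + b)`,
and comparing with `χ₈(a + b) = (-1)^(((a + b)² - 1)/8)` yields `2^((p-1)/4) = (-1)^c`.
Since the units of `ZMod p` form a cyclic group of order `p - 1`, `2` is a fourth power iff
`2^((p-1)/4) = 1`, i.e. iff `c` is even; conversely `p = x² + 64y²` is such a representation with
`c = 2|y|`.
-/

open ZMod NumberTheorySymbols

theorem IsCyclic.exists_pow_eq_iff_pow_eq_one {G : Type*} [CommGroup G] [IsCyclic G] [Finite G]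
    {n m : ℕ} (h : Nat.card G = n * m) (x : G) : (∃ y, y ^ n = x) ↔ x ^ m = 1 := by
  have hn : n ≠ 0 := by rintro rfl; simp [Nat.card_pos.ne'] at h
  have hle : (powMonoidHom n : G →* G).range ≤ (powMonoidHom m).ker := by
    rintro _ ⟨y, rfl⟩
    simp [← pow_mul, ← h, pow_card_eq_one']
  -- both subgroups have order `m`, by cyclicity
  have heq : (powMonoidHom n : G →* G).range = (powMonoidHom m).ker := by
    refine Subgroup.eq_of_le_of_card_ge hle ?_
    rw [IsCyclic.card_powMonoidHom_range, IsCyclic.card_powMonoidHom_ker, h]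
    simp [hn]
  simpa using SetLike.ext_iff.mp heq x

theorem FiniteField.exists_pow_eq_iff_pow_eq_one {F : Type*} [Field F] [Finite F] {n m : ℕ}
    (h : Nat.card F - 1 = n * m) {a : F} (ha : a ≠ 0) : (∃ w, w ^ n = a) ↔ a ^ m = 1 := by
  have hn : n ≠ 0 := by
    rintro rfl
    have := Finite.one_lt_card (α := F)
    omega
  have hunits := IsCyclic.exists_pow_eq_iff_pow_eq_one (G := Fˣ)
    (by rw [Nat.card_units, h]) (Units.mk0 a ha)
  simp only [Units.ext_iff, Units.val_pow_eq_pow_val, Units.val_mk0, Units.val_one] at hunits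
  rw [← hunits]
  constructor
  · rintro ⟨w, rfl⟩
    exact ⟨Units.mk0 w (by simpa [hn] using ha), rfl⟩
  · rintro ⟨y, hy⟩
    exact ⟨y, hy⟩

theorem ZMod.χ₈_nat_eq_neg_one_pow {n : ℕ} (hn : Odd n) : (χ₈ n : ℤ) = (-1) ^ (n ^ 2 / 8) := by
  rw [χ₈_nat_eq_if_mod_eight, neg_one_pow_eq_pow_mod_two, ← Nat.mod_mul_right_div_self,
    Nat.pow_mod]
  have h2 : n % 2 = 1 := Nat.odd_iff.mp hn
  have h16 : n % 16 < 16 := Nat.mod_lt n (by norm_num)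
  rw [show n % 8 = n % 16 % 8 by omega, show n % 2 = n % 16 % 2 by omega] at *
  generalize n % 16 = t at *
  interval_cases t <;> simp_all

theorem ZMod.natCast_pow_div_two_eq_jacobiSym (p : ℕ) [Fact p.Prime] (n : ℕ) :
    (n : ZMod p) ^ (p / 2) = J(n | p) := by
  rw [← jacobiSym.legendreSym.to_jacobiSym, legendreSym.eq_pow]
  push_cast
  rfl

theorem Nat.Prime.coprime_of_sq_add_sq {p a b : ℕ} (hp : p.Prime) (h : a ^ 2 + b ^ 2 = p) :
    a.Coprime b := by
  have hdvd : a.gcd b * a.gcd b ∣ p := by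
    rw [← h, ← sq]
    exact dvd_add (pow_dvd_pow_of_dvd (Nat.gcd_dvd_left a b) 2)
      (pow_dvd_pow_of_dvd (Nat.gcd_dvd_right a b) 2)
  exact Nat.isUnit_iff.mp (hp.prime.squarefree _ hdvd)

theorem Nat.four_dvd_or_four_dvd_of_sq_add_sq_mod_eight {x y : ℕ}
    (h : (x ^ 2 + y ^ 2) % 8 = 1) : 4 ∣ x ∨ 4 ∣ y := by
  rw [Nat.add_mod, Nat.pow_mod, Nat.pow_mod y] at h
  rw [Nat.dvd_iff_mod_eq_zero, Nat.dvd_iff_mod_eq_zero,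
    ← Nat.mod_mod_of_dvd x (by norm_num : 4 ∣ 8), ← Nat.mod_mod_of_dvd y (by norm_num : 4 ∣ 8)]
  have hx := Nat.mod_lt x (show 8 > 0 by norm_num)
  have hy := Nat.mod_lt y (show 8 > 0 by norm_num)
  generalize x % 8 = s at *
  generalize y % 8 = t at *
  interval_cases s <;> interval_cases t <;> simp_all

theorem Nat.Prime.exists_sq_add_sixteen_mul_sq {p : ℕ} [Fact p.Prime] (h8 : p % 8 = 1) :
    ∃ a c : ℕ, a ^ 2 + 16 * c ^ 2 = p := by
  obtain ⟨x, y, h⟩ := Nat.Prime.sq_add_sq (p := p) (by omega)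
  rcases Nat.four_dvd_or_four_dvd_of_sq_add_sq_mod_eight (h ▸ h8) with ⟨c, rfl⟩ | ⟨c, rfl⟩
  · exact ⟨y, c, by rw [← h]; ring⟩
  · exact ⟨x, c, by rw [← h]; ring⟩

theorem jacobiSym_eq_one_of_sq_add_sq {p a b : ℕ} (hab : a.Coprime b) (h : a ^ 2 + b ^ 2 = p)
    (hp : p % 4 = 1) (ha : Odd a) : J(a | p) = 1 := by
  have hmod : (p : ℤ) ≡ b ^ 2 [ZMOD a] := Int.modEq_iff_dvd.mpr ⟨-a, by push_cast [← h]; ring⟩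
  rw [← jacobiSym.quadratic_reciprocity_one_mod_four hp ha, jacobiSym.mod_left' hmod,
    jacobiSym.sq_one' (by rw [Int.gcd_natCast_natCast]; exact hab.symm)]

theorem jacobiSym_add_eq_χ₈_of_sq_add_sq {p a b : ℕ} (hab : a.Coprime b) (h : a ^ 2 + b ^ 2 = p)
    (hp : p % 4 = 1) (hs : Odd (a + b)) : J((a + b : ℕ) | p) = χ₈ (a + b : ℕ) := by
  have hmod : (p : ℤ) ≡ 2 * a ^ 2 [ZMOD (a + b : ℕ)] :=
    Int.modEq_iff_dvd.mpr ⟨a - b, by push_cast [← h]; ring⟩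
  rw [jacobiSym.quadratic_reciprocity_one_mod_four' hs hp, jacobiSym.mod_left' hmod,
    jacobiSym.mul_left, jacobiSym.at_two hs,
    jacobiSym.sq_one' (by rw [Int.gcd_natCast_natCast]; exact Nat.coprime_self_add_right.mpr hab),
    mul_one]

theorem add_pow_four_mul_of_sq_add_sq_eq_zero {R : Type*} [CommRing R] {x y : R}
    (h : x ^ 2 + y ^ 2 = 0) (r : ℕ) :
    (x + y) ^ (4 * r) = 2 ^ (2 * r) * (-1) ^ r * x ^ (4 * r) := by
  have hxy : (x + y) ^ 2 = 2 * x * y := by linear_combination h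
  have hy : y ^ 2 = -x ^ 2 := by linear_combination h
  calc (x + y) ^ (4 * r) = ((x + y) ^ 2) ^ (2 * r) := by rw [← pow_mul]; ring_nf
    _ = 2 ^ (2 * r) * (x ^ 2 * y ^ 2) ^ r := by rw [hxy]; ring
    _ = 2 ^ (2 * r) * (-1) ^ r * x ^ (4 * r) := by rw [hy]; ring

theorem ZMod.two_pow_div_four_eq_neg_one_pow {p a c : ℕ} [Fact p.Prime] (h8 : p % 8 = 1)
    (h : a ^ 2 + 16 * c ^ 2 = p) : (2 : ZMod p) ^ (p / 4) = (-1) ^ c := by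
  set r := p / 8
  have hab : a ^ 2 + (4 * c) ^ 2 = p := by rw [← h]; ring
  have ha : Odd a := by
    have : Odd (a ^ 2 + 16 * c ^ 2) := by rw [h]; exact Nat.odd_iff.mpr (by omega)
    exact (Nat.odd_pow_iff two_ne_zero).mp (by simpa [parity_simps] using this)
  have hs : Odd (a + 4 * c) := ha.add_even (by simp [parity_simps])
  have hcop := (Fact.out : p.Prime).coprime_of_sq_add_sq hab
  have hp4 : p % 4 = 1 := by omega
  have hsq : (a + 4 * c) ^ 2 / 8 = r + a * c := by
    have : (a + 4 * c) ^ 2 = 8 * (r + a * c) + 1 := by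
      rw [show (a + 4 * c) ^ 2 = a ^ 2 + 16 * c ^ 2 + 8 * (a * c) by ring, h]; omega
    rw [this]; generalize a * c = m; omega
  have hA : (a : ZMod p) ^ (4 * r) = 1 := by
    rw [show 4 * r = p / 2 by omega, natCast_pow_div_two_eq_jacobiSym,
      jacobiSym_eq_one_of_sq_add_sq hcop hab hp4 ha, Int.cast_one]
  have hS : ((a + 4 * c : ℕ) : ZMod p) ^ (4 * r) = (-1) ^ (r + a * c) := by
    rw [show 4 * r = p / 2 by omega, natCast_pow_div_two_eq_jacobiSym,
      jacobiSym_add_eq_χ₈_of_sq_add_sq hcop hab hp4 hs, χ₈_nat_eq_neg_one_pow hs, hsq]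
    push_cast
    rfl
  have hzero : (a : ZMod p) ^ 2 + ((4 * c : ℕ) : ZMod p) ^ 2 = 0 := by
    exact_mod_cast (natCast_self p ▸ congrArg (Nat.cast : ℕ → ZMod p) hab)
  have key := add_pow_four_mul_of_sq_add_sq_eq_zero hzero r
  rw [← Nat.cast_add, hS, hA, mul_one, pow_add] at key
  have hr : (-1 : ZMod p) ^ r ≠ 0 := pow_ne_zero _ (neg_ne_zero.mpr one_ne_zero)
  rw [show p / 4 = 2 * r by omega, ← ha.neg_one_pow, ← pow_mul, mul_comm]
  exact mul_left_cancel₀ hr (by linear_combination -key)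

theorem gauss_biquadratic_two (p : ℕ) (hp : p.Prime) (h8 : p % 8 = 1) :
    (∃ z : ℤ, z ^ 4 ≡ 2 [ZMOD (p : ℤ)]) ↔
      ∃ x y : ℤ, (p : ℤ) = x ^ 2 + 64 * y ^ 2 := by
  have := Fact.mk hp
  have hchar : ringChar (ZMod p) ≠ 2 := by rw [ringChar_zmod_n]; omega
  have hquartic : (∃ z : ℤ, z ^ 4 ≡ 2 [ZMOD (p : ℤ)]) ↔ (2 : ZMod p) ^ (p / 4) = 1 := by
    rw [← FiniteField.exists_pow_eq_iff_pow_eq_one (n := 4) (by rw [Nat.card_zmod]; omega)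
      (Ring.two_ne_zero hchar), intCast_surjective.exists]
    simp_rw [← intCast_eq_intCast_iff]
    push_cast
    rfl
  rw [hquartic]
  constructor
  · intro h
    obtain ⟨a, c, hac⟩ := Nat.Prime.exists_sq_add_sixteen_mul_sq h8
    rw [two_pow_div_four_eq_neg_one_pow h8 hac,
      neg_one_pow_eq_one_iff_even (Ring.neg_one_ne_one_of_char_ne_two hchar)] at h
    obtain ⟨d, rfl⟩ := h
    exact ⟨a, d, by rw [← hac]; push_cast; ring⟩
  · rintro ⟨x, y, hxy⟩
    have hac : x.natAbs ^ 2 + 16 * (2 * y.natAbs) ^ 2 = p := by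
      zify
      rw [hxy, sq_abs, mul_pow, sq_abs]
      ring
    rw [two_pow_div_four_eq_neg_one_pow h8 hac, pow_mul]
    simp
end

section
/- Let p be a prime with p ≡ 1 (mod 8). Then −4 is an eighth power modulo p (i.e., there exists an integer z with z⁸ ≡ −4 (mod p)) if and only if there exist integers x and y with p = x² + 32y². -/
/-!
Write `p = u² + 8v²`: Thue's lemma gives `p = a² + 2b²` because `-2` is a square mod `p`, and
`p ≡ 1 (mod 8)` forces `b` to be even. Let `w ∈ 𝔽_p` satisfy `w⁴ = -1`. Since `(1 + w²)⁴ = -4` and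
every fourth root of unity `w²ᵏ` is a square, `-4` is an eighth power iff `1 + w²` is a square.
From `u² = -8v²` we get `((1 + w²) · 2v)² = (u w³)²`, so Euler's criterion reduces the question to
`u^((p-1)/2) · w^(3(p-1)/2)`. Quadratic reciprocity gives `(2v / p) = 1` and `(u / p) = (2 / u)`,
and `w^((p-1)/2) = (-1)^((p-1)/8)`; the product is `(-1)^v`. Hence `-4` is an eighth power iff `v`
is even, i.e. iff `p = x² + 32y²`.
-/

open ZMod

theorem ZMod.exists_abs_le_sqrt_intCast_eq_mul (n : ℕ) [NeZero n] (r : ZMod n) :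
    ∃ a b : ℤ, (a ≠ 0 ∨ b ≠ 0) ∧ |a| ≤ n.sqrt ∧ |b| ≤ n.sqrt ∧ (a : ZMod n) = r * b := by
  have hcard : Fintype.card (ZMod n) < Fintype.card (Fin (n.sqrt + 1) × Fin (n.sqrt + 1)) := by
    simpa only [ZMod.card, Fintype.card_prod, Fintype.card_fin] using Nat.lt_succ_sqrt n
  obtain ⟨⟨x₁, y₁⟩, ⟨x₂, y₂⟩, hne, heq⟩ := Fintype.exists_ne_map_eq_of_card_lt
    (fun xy : Fin (n.sqrt + 1) × Fin (n.sqrt + 1) => ((xy.1 : ℕ) : ZMod n) - r * (xy.2 : ℕ)) hcard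
  refine ⟨(x₁ : ℤ) - x₂, (y₁ : ℤ) - y₂, ?_, ?_, ?_, ?_⟩
  · by_contra! h
    exact hne (by simp only [Prod.mk.injEq, Fin.ext_iff]; omega)
  · exact abs_le.mpr ⟨by omega, by omega⟩
  · exact abs_le.mpr ⟨by omega, by omega⟩
  · push_cast
    linear_combination heq

theorem Nat.Prime.exists_sq_add_two_mul_sq {p : ℕ} (hp : p.Prime) (h : IsSquare (-2 : ZMod p)) :
    ∃ a b : ℤ, (p : ℤ) = a ^ 2 + 2 * b ^ 2 := by
  have : NeZero p := ⟨hp.ne_zero⟩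
  obtain ⟨r, hr⟩ := h
  obtain ⟨a, b, hab, ha, hb, habr⟩ := ZMod.exists_abs_le_sqrt_intCast_eq_mul p r
  obtain ⟨c, hc⟩ : (p : ℤ) ∣ a ^ 2 + 2 * b ^ 2 := by
    rw [← ZMod.intCast_zmod_eq_zero_iff_dvd]
    push_cast
    linear_combination (b : ZMod p) ^ 2 * (-hr) + (a + r * b) * habr
  have hsqrt : (p.sqrt : ℤ) ^ 2 < p := by
    have hne : p.sqrt * p.sqrt ≠ p := fun h => hp.prime.not_isSquare ⟨p.sqrt, h.symm⟩
    have : p.sqrt * p.sqrt < p := lt_of_le_of_ne (Nat.sqrt_le p) hne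
    rw [sq]
    exact_mod_cast this
  have ha2 : a ^ 2 ≤ (p.sqrt : ℤ) ^ 2 := sq_le_sq' (abs_le.mp ha).1 (abs_le.mp ha).2
  have hb2 : b ^ 2 ≤ (p.sqrt : ℤ) ^ 2 := sq_le_sq' (abs_le.mp hb).1 (abs_le.mp hb).2
  have hpos : 0 < a ^ 2 + 2 * b ^ 2 := by
    rcases hab with h | h <;> positivity
  have hp0 : (0 : ℤ) < p := by exact_mod_cast hp.pos
  have hc0 : 0 < c := by nlinarith
  have hc3 : c < 3 := by nlinarith
  interval_cases c
  · exact ⟨a, b, by linarith⟩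
  · obtain ⟨a', rfl⟩ : Even a := by
      rw [← Int.even_pow' two_ne_zero]
      exact ⟨p - b ^ 2, by linarith⟩
    exact ⟨b, a', by linarith⟩

theorem Nat.Prime.exists_sq_add_eight_mul_sq {p : ℕ} (hp : p.Prime) (h8 : p % 8 = 1) :
    ∃ u v : ℕ, p = u ^ 2 + 8 * v ^ 2 := by
  have := Fact.mk hp
  obtain ⟨a, b, hab⟩ := hp.exists_sq_add_two_mul_sq <|
    (ZMod.exists_sq_eq_neg_two_iff (by omega)).mpr (Or.inl h8)
  -- a square is `0, 1` or `4` mod `8`, so `a ^ 2 + 2 * b ^ 2 ≡ 1` forces `b` to be even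
  obtain ⟨b', rfl⟩ : Even b := by
    by_contra hb
    obtain ⟨k, rfl⟩ := Int.not_even_iff_odd.mp hb
    have h : ((a ^ 2 + 2 * (2 * k + 1) ^ 2 : ℤ) : ZMod 8) = 1 := by
      rw [← hab, Int.cast_natCast, ← ZMod.natCast_mod, h8, Nat.cast_one]
    push_cast at h
    exact (by decide : ∀ x y : ZMod 8, x ^ 2 + 2 * (2 * y + 1) ^ 2 ≠ 1) _ _ h
  refine ⟨a.natAbs, b'.natAbs, ?_⟩
  zify
  rw [sq_abs, sq_abs, hab]
  ring

theorem Nat.Coprime.of_prime_sq_add_mul_sq {a b k : ℕ} (hp : (a ^ 2 + k * b ^ 2).Prime) :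
    a.Coprime b := by
  have hdvd : a.gcd b * a.gcd b ∣ a ^ 2 + k * b ^ 2 := by
    rw [← sq]
    exact dvd_add (pow_dvd_pow_of_dvd (Nat.gcd_dvd_left a b) 2)
      (dvd_mul_of_dvd_right (pow_dvd_pow_of_dvd (Nat.gcd_dvd_right a b) 2) k)
  exact Nat.isUnit_iff.mp (hp.prime.squarefree _ hdvd)

theorem Odd.of_eq_sq_add_eight_mul_sq {p u v : ℕ} (hp : Odd p) (huv : p = u ^ 2 + 8 * v ^ 2) :
    Odd u := by
  subst huv
  simpa [parity_simps, Nat.odd_pow_iff two_ne_zero] using hp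

theorem ZMod.χ₈_mul_neg_one_pow_div_eight {u : ℕ} (hu : Odd u) (v : ℕ) :
    χ₈ u * (-1) ^ ((u ^ 2 + 8 * v ^ 2) / 8) = (-1) ^ v := by
  obtain ⟨a, r, hr8, rfl⟩ : ∃ a r, r < 8 ∧ u = r + 8 * a :=
    ⟨u / 8, u % 8, Nat.mod_lt _ (by norm_num), (Nat.mod_add_div u 8).symm⟩
  have hodd : r % 2 = 1 := by have := Nat.odd_iff.mp hu; omega
  have hχ : χ₈ r * (-1) ^ (r ^ 2 / 8) = 1 := by
    interval_cases r <;> first | omega | decide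
  have hsplit : (r + 8 * a) ^ 2 + 8 * v ^ 2 = r ^ 2 + 8 * (2 * (4 * a ^ 2 + r * a) + v ^ 2) := by
    ring
  rw [hsplit, Nat.add_mul_div_left _ _ (by norm_num), pow_add, pow_add, pow_mul, neg_one_sq,
    one_pow, one_mul, neg_one_pow_congr (Nat.even_pow' two_ne_zero), ← mul_assoc,
    χ₈_nat_mod_eight, Nat.add_mul_mod_self_left, Nat.mod_eq_of_lt hr8, hχ, one_mul]

theorem ZMod.exists_pow_eq_intCast_iff (n k : ℕ) (c : ℤ) :
    (∃ z : ℤ, z ^ k ≡ c [ZMOD n]) ↔ ∃ z : ZMod n, z ^ k = c := by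
  constructor
  · rintro ⟨z, hz⟩
    exact ⟨z, by exact_mod_cast (ZMod.intCast_eq_intCast_iff _ _ _).mpr hz⟩
  · rintro ⟨z, hz⟩
    obtain ⟨z, rfl⟩ := ZMod.intCast_surjective z
    exact ⟨z, (ZMod.intCast_eq_intCast_iff _ _ _).mp (by exact_mod_cast hz)⟩

theorem exists_pow_eight_eq_neg_four_iff {R : Type*} [CommRing R] [IsDomain R] {w : R}
    (hw : w ^ 4 = -1) : (∃ z : R, z ^ 8 = -4) ↔ IsSquare (1 + w ^ 2) := by
  -- `(1 + w²)⁴ = -4`, so `z⁸ = -4` forces `z² = w²ᵏ (1 + w²)`, and then `(z w⁴⁻ᵏ)² = 1 + w²`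
  constructor
  · rintro ⟨z, hz⟩
    have hfactor : (z ^ 2 - (1 + w ^ 2)) * (z ^ 2 + (1 + w ^ 2)) *
        ((z ^ 2 - w ^ 2 * (1 + w ^ 2)) * (z ^ 2 + w ^ 2 * (1 + w ^ 2))) = 0 := by
      linear_combination hz + (-(4 + 4 * w ^ 2 + (w ^ 4 + 1)) -
        (z ^ 4 - (1 + w ^ 2) ^ 2) * (1 + w ^ 2) ^ 2) * hw
    rcases mul_eq_zero.mp hfactor with h | h <;> rcases mul_eq_zero.mp h with h | h
    · exact ⟨z, by linear_combination -h⟩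
    · exact ⟨z * w ^ 2, by linear_combination -w ^ 4 * h + (1 + w ^ 2) * hw⟩
    · exact ⟨z * w ^ 3, by linear_combination -w ^ 6 * h - (1 + w ^ 2) * (w ^ 4 - 1) * hw⟩
    · exact ⟨z * w, by linear_combination -w ^ 2 * h + (1 + w ^ 2) * hw⟩
  · rintro ⟨t, ht⟩
    exact ⟨t, by linear_combination -(t * t + (1 + w ^ 2)) * ((t * t) ^ 2 + (1 + w ^ 2) ^ 2) * ht +
      (4 + 4 * w ^ 2 + (w ^ 4 + 1)) * hw⟩

section Legendre

variable {p : ℕ} [Fact p.Prime]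

theorem legendreSym_eq_jacobiSym_of_modEq (hp : p % 4 = 1) {n : ℕ} (hn : Odd n) {a m : ℤ}
    (ha : a.gcd n = 1) (h : (p : ℤ) ≡ m * a ^ 2 [ZMOD n]) : legendreSym p n = jacobiSym m n := by
  rw [jacobiSym.legendreSym.to_jacobiSym, jacobiSym.quadratic_reciprocity_one_mod_four' hn hp,
    jacobiSym.mod_left' h, jacobiSym.mul_left, jacobiSym.sq_one' ha, mul_one]

theorem legendreSym_two_of_mod_eight_eq_one (hp : p % 8 = 1) : legendreSym p 2 = 1 := by
  rw [legendreSym.at_two (by omega), χ₈_nat_mod_eight, hp]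
  rfl

theorem legendreSym_eq_one_of_modEq_sq (hp : p % 8 = 1) {n : ℕ} (hn : n ≠ 0) {a : ℤ}
    (ha : a.gcd n = 1) (h : (p : ℤ) ≡ a ^ 2 [ZMOD n]) : legendreSym p n = 1 := by
  obtain ⟨k, c, hc, rfl⟩ := Nat.exists_eq_two_pow_mul_odd hn
  push_cast at ha h ⊢
  have hac : a.gcd c = 1 := Int.isCoprime_iff_gcd_eq_one.mp
    (Int.isCoprime_iff_gcd_eq_one.mpr ha).of_mul_right_right
  rw [legendreSym.mul, jacobiSym.legendreSym.to_jacobiSym p (2 ^ k), jacobiSym.pow_left,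
    ← jacobiSym.legendreSym.to_jacobiSym, legendreSym_two_of_mod_eight_eq_one hp, one_pow, one_mul,
    legendreSym_eq_jacobiSym_of_modEq (by omega) hc hac (m := 1) (by simpa using h.of_mul_left _),
    jacobiSym.one_left]

end Legendre

section SumOfSquareAndEightSquares

variable {p : ℕ} [Fact p.Prime]

theorem ZMod.exists_pow_four_eq_neg_one (hp : p % 8 = 1) : ∃ w : ZMod p, w ^ 4 = -1 := by
  obtain ⟨i, hi⟩ := ZMod.exists_sq_eq_neg_one_iff.mpr (by omega : p % 4 ≠ 3)
  have hi0 : -i ≠ 0 := neg_ne_zero.mpr fun h => by simp [h] at hi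
  obtain ⟨w, hw⟩ := (ZMod.euler_criterion p hi0).mpr <| by
    rw [show p / 2 = 4 * (p / 8) by omega, pow_mul,
      show (-i) ^ 4 = 1 by linear_combination (1 - i * i) * hi, one_pow]
  exact ⟨w, by linear_combination -(w * w - i) * hw - hi⟩

variable {u v : ℕ}

theorem legendreSym_eq_χ₈_of_eq_sq_add_eight_mul_sq (hp : p % 4 = 1)
    (huv : p = u ^ 2 + 8 * v ^ 2) : legendreSym p u = χ₈ u := by
  have hu : Odd u := (Nat.odd_iff.mpr (by omega)).of_eq_sq_add_eight_mul_sq huv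
  have hcop : Int.gcd ((2 * v : ℕ) : ℤ) u = 1 := by
    rw [Int.gcd_natCast_natCast]
    exact Nat.Coprime.mul_left (Nat.coprime_two_left.mpr hu)
      (Nat.Coprime.of_prime_sq_add_mul_sq (by rw [← huv]; exact Fact.out)).symm
  rw [legendreSym_eq_jacobiSym_of_modEq hp hu hcop (m := 2), jacobiSym.at_two hu]
  exact (Int.modEq_iff_dvd.mpr ⟨-u, by push_cast [huv]; ring⟩)

theorem legendreSym_two_mul_of_eq_sq_add_eight_mul_sq (hp : p % 8 = 1)
    (huv : p = u ^ 2 + 8 * v ^ 2) : legendreSym p (2 * v) = 1 := by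
  have hprime : (u ^ 2 + 8 * v ^ 2).Prime := by rw [← huv]; exact Fact.out
  have hcop : u.Coprime v := Nat.Coprime.of_prime_sq_add_mul_sq hprime
  have hv : v ≠ 0 := by
    rintro rfl
    rw [(Nat.coprime_zero_right u).mp hcop] at hprime
    exact Nat.not_prime_one hprime
  rw [legendreSym.mul, legendreSym_two_of_mod_eight_eq_one hp, one_mul]
  refine legendreSym_eq_one_of_modEq_sq hp hv (a := u) (by simpa [Int.gcd_natCast_natCast]) ?_
  exact (Int.modEq_iff_dvd.mpr ⟨-8 * v, by push_cast [huv]; ring⟩)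

theorem one_add_sq_pow_div_two_eq_neg_one_pow (hp : p % 8 = 1) (huv : p = u ^ 2 + 8 * v ^ 2)
    {w : ZMod p} (hw : w ^ 4 = -1) : (1 + w ^ 2) ^ (p / 2) = (-1) ^ v := by
  have hu : Odd u := (Nat.odd_iff.mpr (by omega)).of_eq_sq_add_eight_mul_sq huv
  -- `((1 + w²) · 2v)² = 8 v² w² = (u w³)²`, and `p / 2` is even
  have hsq : ((1 + w ^ 2) * (2 * v : ℕ)) ^ 2 = ((u : ZMod p) * w ^ 3) ^ 2 := by
    have huv' : (u : ZMod p) ^ 2 + 8 * (v : ZMod p) ^ 2 = 0 := by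
      have : ((u ^ 2 + 8 * v ^ 2 : ℕ) : ZMod p) = 0 := by rw [← huv]; exact ZMod.natCast_self p
      exact_mod_cast this
    push_cast
    linear_combination (-w ^ 6) * huv' + (4 * v ^ 2 + 8 * v ^ 2 * w ^ 2) * hw
  have h2v_pow : ((2 * v : ℕ) : ZMod p) ^ (p / 2) = 1 := by
    have := legendreSym.eq_pow p ((2 * v : ℕ) : ℤ)
    push_cast at this ⊢
    rw [← this, legendreSym_two_mul_of_eq_sq_add_eight_mul_sq hp huv, Int.cast_one]
  have hu_pow : (u : ZMod p) ^ (p / 2) = χ₈ u := by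
    have := legendreSym.eq_pow p u
    push_cast at this
    rw [← this, legendreSym_eq_χ₈_of_eq_sq_add_eight_mul_sq (by omega) huv]
  have hw_pow : w ^ (p / 2) = (-1) ^ (p / 8) := by
    rw [show p / 2 = 4 * (p / 8) by omega, pow_mul, hw]
  have key : ((1 + w ^ 2) * (2 * v : ℕ)) ^ (p / 2) = ((u : ZMod p) * w ^ 3) ^ (p / 2) := by
    rw [show p / 2 = 2 * (p / 4) by omega, pow_mul, pow_mul, hsq]
  rw [mul_pow, mul_pow, h2v_pow, mul_one, hu_pow, ← pow_mul, mul_comm 3, pow_mul, hw_pow,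
    ← pow_mul] at key
  have hχ := congrArg (Int.cast : ℤ → ZMod p) (χ₈_mul_neg_one_pow_div_eight hu v)
  push_cast [← huv] at hχ
  rw [key, neg_one_pow_congr (n := p / 8) (by simp [Nat.even_mul, show ¬Even 3 by decide]), hχ]

theorem exists_pow_eight_modEq_neg_four_iff_even (hp : p % 8 = 1) (huv : p = u ^ 2 + 8 * v ^ 2) :
    (∃ z : ℤ, z ^ 8 ≡ -4 [ZMOD p]) ↔ Even v := by
  have : Fact (2 < p) := ⟨by have := (Fact.out : p.Prime).two_le; omega⟩
  obtain ⟨w, hw⟩ := ZMod.exists_pow_four_eq_neg_one hp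
  have hw2 : 1 + w ^ 2 ≠ 0 := by
    intro h
    apply ZMod.neg_one_ne_one (n := p)
    rw [← hw]
    linear_combination (w ^ 2 - 1) * h
  rw [ZMod.exists_pow_eq_intCast_iff, Int.cast_neg, Int.cast_ofNat,
    exists_pow_eight_eq_neg_four_iff hw, ZMod.euler_criterion p hw2,
    one_add_sq_pow_div_two_eq_neg_one_pow hp huv hw,
    neg_one_pow_eq_one_iff_even ZMod.neg_one_ne_one]

end SumOfSquareAndEightSquares

theorem barrucand_cohn (p : ℕ) (hp : p.Prime) (h8 : p % 8 = 1) :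
    (∃ z : ℤ, z ^ 8 ≡ -4 [ZMOD (p : ℤ)]) ↔
      ∃ x y : ℤ, (p : ℤ) = x ^ 2 + 32 * y ^ 2 := by
  have := Fact.mk hp
  obtain ⟨u, v, huv⟩ := hp.exists_sq_add_eight_mul_sq h8
  rw [exists_pow_eight_modEq_neg_four_iff_even h8 huv]
  constructor
  · rintro ⟨y, rfl⟩
    exact ⟨u, y, by rw [huv]; push_cast; ring⟩
  · rintro ⟨x, y, hxy⟩
    have hrep : p = x.natAbs ^ 2 + 8 * (2 * y).natAbs ^ 2 := by
      zify
      rw [sq_abs, sq_abs, hxy]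
      ring
    rw [← exists_pow_eight_modEq_neg_four_iff_even h8 huv,
      exists_pow_eight_modEq_neg_four_iff_even h8 hrep]
    exact Int.natAbs_even.mpr (even_two_mul y)
end
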